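/- With the weak formulation of the alignment operator, the functions ψ(φ) = 1 and ψ(φ) = φ (on a lift) are collision invariants: ∫_{𝕋¹} Q_{AL}(f,f) ψ dφ = 0; and for ψ(φ) = φ², one has ∫_{𝕋¹} Q_{AL}(f,f) φ² dφ = -(1/4)∫∫_{|φ-φ*|<π/2} b(φ,φ*) f(φ) f(φ*) (φ-φ*)² dφ* dφ ≤ 0. -/

import Mathlib

open MeasureTheory Set

/-- Weak form of the alignment collision operator tested against `ψ`:
`∫∫_{|φ*-φ|<π/2} b f f* (ψ((φ+φ*)/2) - (ψ(φ)+ψ(φ*))/2)`. -/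
noncomputable def weakAL (b : ℝ → ℝ → ℝ) (f : ℝ → ℝ) (ψ : ℝ → ℝ) : ℝ :=
  ∫ φ in Ioc 0 (2*Real.pi), ∫ φs in Ioo (φ - Real.pi/2) (φ + Real.pi/2),
    b φ φs * f φ * f φs * (ψ ((φ + φs)/2) - (ψ φ + ψ φs)/2)

/- Since the midpoint `(φ + φ*)/2` is taken on the lift, every test function that respects
midpoints (in particular `1` and `φ`) is a collision invariant pointwise in `(φ, φ*)`. -/
theorem weakAL_eq_zero_of_map_midpoint (b : ℝ → ℝ → ℝ) (f ψ : ℝ → ℝ)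
    (hψ : ∀ x y, ψ ((x + y) / 2) = (ψ x + ψ y) / 2) : weakAL b f ψ = 0 := by
  simp only [weakAL, hψ, sub_self, mul_zero, integral_zero]

theorem weakAL_sq (b : ℝ → ℝ → ℝ) (f : ℝ → ℝ) :
    weakAL b f (fun x => x ^ 2)
      = -(1/4) * ∫ φ in Ioc 0 (2*Real.pi), ∫ φs in Ioo (φ - Real.pi/2) (φ + Real.pi/2),
          b φ φs * f φ * f φs * (φ - φs) ^ 2 := by
  have midpoint_sq (x y : ℝ) : ((x + y) / 2) ^ 2 - (x ^ 2 + y ^ 2) / 2 = -(1/4) * (x - y) ^ 2 := by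
    ring
  simp only [weakAL, midpoint_sq, mul_left_comm _ (-(1/4) : ℝ), integral_const_mul]

theorem integral_integral_mul_sq_nonneg (b : ℝ → ℝ → ℝ) (f : ℝ → ℝ)
    (hb : ∀ x y, 0 ≤ b x y) (hf : ∀ x, 0 ≤ f x) (s : Set ℝ) (t : ℝ → Set ℝ) :
    0 ≤ ∫ φ in s, ∫ φs in t φ, b φ φs * f φ * f φs * (φ - φs) ^ 2 :=
  integral_nonneg fun φ => integral_nonneg fun φs =>
    mul_nonneg (mul_nonneg (mul_nonneg (hb φ φs) (hf φ)) (hf φs)) (sq_nonneg _)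

theorem stmt_15_general (b : ℝ → ℝ → ℝ) (f : ℝ → ℝ)
    (hb_nonneg : ∀ x y, 0 ≤ b x y)
    (hf_nonneg : ∀ x, 0 ≤ f x) :
    weakAL b f (fun _ => 1) = 0 ∧
    weakAL b f (fun x => x) = 0 ∧
    weakAL b f (fun x => x^2)
      = -(1/4) * (∫ φ in Ioc 0 (2*Real.pi), ∫ φs in Ioo (φ - Real.pi/2) (φ + Real.pi/2),
          b φ φs * f φ * f φs * (φ - φs)^2) ∧
    weakAL b f (fun x => x^2) ≤ 0 := by
  refine ⟨weakAL_eq_zero_of_map_midpoint b f _ fun _ _ => by norm_num,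
    weakAL_eq_zero_of_map_midpoint b f _ fun _ _ => rfl, weakAL_sq b f, ?_⟩
  rw [weakAL_sq]
  have := integral_integral_mul_sq_nonneg b f hb_nonneg hf_nonneg (Ioc 0 (2*Real.pi))
    fun φ => Ioo (φ - Real.pi/2) (φ + Real.pi/2)
  linarith

theorem stmt_15 (b : ℝ → ℝ → ℝ) (f : ℝ → ℝ)
    (hb_meas : Measurable (Function.uncurry b)) (hb_sym : ∀ x y, b x y = b y x)
    (hb_nonneg : ∀ x y, 0 ≤ b x y)
    (hf_meas : Measurable f) (hf_nonneg : ∀ x, 0 ≤ f x)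
    (hf_per : Function.Periodic f (2*Real.pi))
    (hf_int : IntegrableOn f (Ioc 0 (2*Real.pi))) :
    weakAL b f (fun _ => 1) = 0 ∧
    weakAL b f (fun x => x) = 0 ∧
    weakAL b f (fun x => x^2)
      = -(1/4) * (∫ φ in Ioc 0 (2*Real.pi), ∫ φs in Ioo (φ - Real.pi/2) (φ + Real.pi/2),
          b φ φs * f φ * f φs * (φ - φs)^2) ∧
    weakAL b f (fun x => x^2) ≤ 0 :=
  stmt_15_general b f hb_nonneg hf_nonneg
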